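/- Let f : ℝ^d → ℝ be Lipschitz continuous with Lipschitz constant κ (with respect to the Euclidean norm), let x_1, …, x_m ∈ ℝ^d and y_1, …, y_n ∈ ℝ^d, and define K ∈ ℝ^{m×n} by K_{i,j} = f(x_i − y_j). Suppose there is an assignment of each x_i to a center c(i) ∈ ℝ^d taking at most r distinct values and satisfying ‖x_i − c(i)‖_2 ≤ δ for all i. Then the matrix à ∈ ℝ^{m×n} defined by Ã_{i,j} = f(c(i) − y_j) has rank at most r and satisfies ‖K − Ã‖_F ≤ κ δ √(m n). -/

import Mathlib

open scoped NNReal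

/-- Frobenius norm of a real matrix. -/
noncomputable def frobNorm {m n : Type*} [Fintype m] [Fintype n]
    (M : Matrix m n ℝ) : ℝ :=
  Real.sqrt (∑ i, ∑ j, (M i j) ^ 2)

/-!
The rows of `Ã` only depend on the center `c i`, so `Ã` has at most `r` distinct rows and its row
space has dimension at most `r`. Each entry of `K - Ã` is `f (x i - y j) - f (c i - y j)`, and
since the two arguments differ by `x i - c i`, it is at most `κ δ` in absolute value; summing
`m n` squares of such entries gives the Frobenius bound.
-/

open Finset

theorem Matrix.rank_le_ncard_range_row {m n R : Type*} [Finite m] [Fintype n] [Field R]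
    (M : Matrix m n R) : M.rank ≤ (Set.range M.row).ncard := by
  have := (Set.finite_range M.row).fintype
  rw [M.rank_eq_finrank_span_row, Set.ncard_eq_toFinset_card']
  exact finrank_span_le_card _

theorem Matrix.rank_of_comp_le_ncard_range {m n α R : Type*} [Finite m] [Fintype n] [Field R]
    (g : α → n → R) (c : m → α) : (Matrix.of fun i j => g (c i) j).rank ≤ (Set.range c).ncard :=
  calc (Matrix.of fun i j => g (c i) j).rank
      ≤ (Set.range (g ∘ c)).ncard := Matrix.rank_le_ncard_range_row _
    _ ≤ (Set.range c).ncard := by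
      rw [Set.range_comp]
      exact Set.ncard_image_le (Set.finite_range c)

theorem frobNorm_le_of_forall_abs_le {m n : Type*} [Fintype m] [Fintype n]
    (M : Matrix m n ℝ) {ε : ℝ} (h : ∀ i j, |M i j| ≤ ε) :
    frobNorm M ≤ ε * √(Fintype.card m * Fintype.card n) := by
  rcases isEmpty_or_nonempty m with _ | ⟨⟨i⟩⟩
  · simp [frobNorm]
  rcases isEmpty_or_nonempty n with _ | ⟨⟨j⟩⟩
  · simp [frobNorm]
  have hε : 0 ≤ ε := (abs_nonneg _).trans (h i j)
  calc frobNorm M ≤ √(∑ _i : m, ∑ _j : n, ε ^ 2) :=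
        Real.sqrt_le_sqrt <| sum_le_sum fun i _ => sum_le_sum fun j _ =>
          sq_le_sq' (abs_le.mp (h i j)).1 (abs_le.mp (h i j)).2
    _ = ε * √(Fintype.card m * Fintype.card n) := by
        rw [sum_const, sum_const, card_univ, card_univ, nsmul_eq_mul, nsmul_eq_mul,
          ← mul_assoc, mul_comm, Real.sqrt_mul' _ (by positivity), Real.sqrt_sq hε]

/-- If each `x i` is assigned a center `c i`, where the centers take at most `r`
distinct values and `‖x i - c i‖ ≤ δ`, then the matrix `Ã` with entries
`f (c i - y j)` has rank at most `r` and `‖K - Ã‖_F ≤ κ δ √(m n)`. -/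
theorem kernel_matrix_center_approx
    (d m n r : ℕ) (κ : ℝ≥0) (f : EuclideanSpace ℝ (Fin d) → ℝ)
    (hf : LipschitzWith κ f)
    (x : Fin m → EuclideanSpace ℝ (Fin d))
    (y : Fin n → EuclideanSpace ℝ (Fin d))
    (K : Matrix (Fin m) (Fin n) ℝ)
    (hK : ∀ i j, K i j = f (x i - y j))
    (c : Fin m → EuclideanSpace ℝ (Fin d))
    (hc : (Set.range c).ncard ≤ r)
    (δ : ℝ) (hδ : ∀ i, ‖x i - c i‖ ≤ δ) :
    (Matrix.of fun i j => f (c i - y j)).rank ≤ r ∧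
    frobNorm (K - Matrix.of fun i j => f (c i - y j)) ≤
      (κ : ℝ) * δ * Real.sqrt (m * n) := by
  refine ⟨(Matrix.rank_of_comp_le_ncard_range (fun v j => f (v - y j)) c).trans hc, ?_⟩
  have hentry : ∀ i j, |(K - Matrix.of fun i j => f (c i - y j)) i j| ≤ κ * δ := by
    intro i j
    rw [Matrix.sub_apply, hK, Matrix.of_apply, ← Real.dist_eq]
    calc dist (f (x i - y j)) (f (c i - y j))
        ≤ κ * dist (x i - y j) (c i - y j) := hf.dist_le_mul _ _
      _ ≤ κ * δ := by
        rw [dist_sub_right, dist_eq_norm]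
        exact mul_le_mul_of_nonneg_left (hδ i) κ.coe_nonneg
  simpa using frobNorm_le_of_forall_abs_le _ hentry
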